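/- Let X be a time-homogeneous Markov chain on a finite state space S, let x, y ∈ S and let T be a positive integer. Then for any coupling ((X_t, Y_t))_{t=0}^T with (X_0, Y_0) = (x, y) and any separating sequence A = (A_t)_{t=0}^T, P(X_t = Y_t for some 0 ≤ t ≤ T) ≤ 2 − S^A_T(x,y). Consequently, the optimal meeting probability satisfies C_T(x,y) ≤ 2 − S_T(x,y). -/

import Mathlib

open MeasureTheory Filter Topology
open scoped ENNReal

/-- The distribution at time `n` of the time-homogeneous Markov chain with transition
kernel `K` started at `x`, i.e. `P^n(x, ·)`. -/
noncomputable def stepDist {S : Type*} (K : S → PMF S) (x : S) : ℕ → PMF S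
  | 0 => PMF.pure x
  | n + 1 => (stepDist K x n).bind K

/-- Total variation distance between two probability distributions on a countable space:
`sup_{A ⊆ S} |μ(A) − ν(A)|`. -/
noncomputable def tvDist {S : Type*} (μ ν : PMF S) : ℝ :=
  ⨆ A : Set S, |(∑' a : A, μ ↑a).toReal - (∑' a : A, ν ↑a).toReal|

open Classical in
/-- `X` is a copy, on the probability space `(Ω, Pr)`, of the time-homogeneous Markov chain
with transition kernel `K` started at `x`: all finite-dimensional distributions are the
ones prescribed by `x` and `K`. -/
def IsCopy {S Ω : Type*} [MeasurableSpace Ω] (Pr : Measure Ω)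
    (K : S → PMF S) (x : S) (X : ℕ → Ω → S) : Prop :=
  ∀ n : ℕ, ∀ path : ℕ → S,
    Pr {ω | ∀ i ≤ n, X i ω = path i}
      = (if path 0 = x then (1 : ℝ≥0∞) else 0) *
        ∏ i ∈ Finset.range n, K (path i) (path (i + 1))

open Classical in
/-- `X` is, on the probability space `(Ω, Pr)`, a copy over the finite time horizon `T` of the
Markov chain with transition kernel `K` started at `x`. -/
def IsCopyUpTo {S Ω : Type*} [MeasurableSpace Ω] (Pr : Measure Ω)
    (K : S → PMF S) (x : S) (T : ℕ) (X : ℕ → Ω → S) : Prop :=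
  ∀ n ≤ T, ∀ path : ℕ → S,
    Pr {ω | ∀ i ≤ n, X i ω = path i}
      = (if path 0 = x then (1 : ℝ≥0∞) else 0) *
        ∏ i ∈ Finset.range n, K (path i) (path (i + 1))

open Classical in
/-- `P(X_t ∈ A_t for all 0 ≤ t ≤ T | X_0 = x)` for the chain with kernel `K`. -/
noncomputable def stayProb {S : Type*} [Fintype S] (K : S → PMF S) (x : S) (T : ℕ)
    (A : ℕ → Set S) : ℝ≥0∞ :=
  ∑ p : Fin (T + 1) → S,
    if p 0 = x ∧ ∀ t : Fin (T + 1), p t ∈ A (t : ℕ) then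
      ∏ i : Fin T, K (p i.castSucc) (p i.succ) else 0

/-- The separation `S^A_T(x,y)` of a separating sequence `A = (A_t)_{t=0}^T`. -/
noncomputable def separation {S : Type*} [Fintype S] (K : S → PMF S) (x y : S) (T : ℕ)
    (A : ℕ → Set S) : ℝ :=
  (stayProb K x T A).toReal + (stayProb K y T (fun t => (A t)ᶜ)).toReal

/-- The optimal meeting probability `C_T(x,y)`: the maximal probability, over all couplings
over the horizon `T` of two copies of the chain started at `x` and `y`, that the copies meet by
time `T`. -/
noncomputable def optMeetProb {S : Type*} [Fintype S] (K : S → PMF S) (x y : S) (T : ℕ) : ℝ :=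
  sSup {r : ℝ | ∃ (Ω : Type) (_ : MeasurableSpace Ω) (Pr : Measure Ω),
    IsProbabilityMeasure Pr ∧ ∃ X Y : ℕ → Ω → S, IsCopyUpTo Pr K x T X ∧ IsCopyUpTo Pr K y T Y ∧
      r = (Pr {ω | ∃ t ≤ T, X t ω = Y t ω}).toReal}

/-- The optimal separation `S_T(x,y)`: the maximal separation over all separating sequences. -/
noncomputable def optSeparation {S : Type*} [Fintype S] (K : S → PMF S) (x y : S) (T : ℕ) : ℝ :=
  sSup {r : ℝ | ∃ A : ℕ → Set S, r = separation K x y T A}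

/-!
If the copies meet at time `t ≤ T`, then either `X_t ∉ A_t` or `Y_t ∈ A_t`, so the meeting
probability is at most `P(X leaves A) + P(Y leaves Aᶜ) ≤ (1 - P_x(X stays in A)) +
(1 - P_y(Y stays in Aᶜ)) = 2 - S^A_T(x,y)`. The copies need not be measurable as processes, so
`P(X leaves A)` is controlled through outer measure: the event is covered by the cylinder sets of
the leaving paths, whose measures are the path weights.
-/

section

variable {S : Type*}

open Classical in
noncomputable def pathWeight (K : S → PMF S) (x : S) (T : ℕ) (p : Fin (T + 1) → S) : ℝ≥0∞ :=
  if p 0 = x then ∏ i : Fin T, K (p i.castSucc) (p i.succ) else 0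

lemma PMF.sum_coe_eq_one [Fintype S] (μ : PMF S) : ∑ s, μ s = 1 := by
  rw [← tsum_fintype (L := SummationFilter.unconditional _), μ.tsum_coe]

lemma pathWeight_snoc (K : S → PMF S) (x : S) (T : ℕ) (q : Fin (T + 1) → S) (s : S) :
    pathWeight K x (T + 1) (Fin.snoc q s) = pathWeight K x T q * K (q (Fin.last T)) s := by
  have h0 : (Fin.snoc q s : Fin (T + 2) → S) 0 = q 0 := by simp [Fin.snoc]
  simp only [pathWeight, Fin.prod_univ_castSucc, Fin.succ_castSucc, Fin.snoc_castSucc,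
    Fin.succ_last, Fin.snoc_last, ite_mul, zero_mul]
  rw [h0]

lemma sum_pathWeight [Fintype S] (K : S → PMF S) (x : S) (T : ℕ) :
    ∑ p, pathWeight K x T p = 1 := by
  induction T with
  | zero =>
    classical
    rw [Fintype.sum_equiv (Equiv.funUnique (Fin 1) S) _ (fun s => if s = x then 1 else 0)
      (fun p => by simp [pathWeight]), Finset.sum_ite_eq']
    simp
  | succ T ih =>
    rw [← (Fin.snocEquiv fun _ => S).sum_comp, Fintype.sum_prod_type, Finset.sum_comm]
    change ∑ q, ∑ s, pathWeight K x (T + 1) (Fin.snoc q s) = 1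
    simp only [pathWeight_snoc, ← Finset.mul_sum, PMF.sum_coe_eq_one, mul_one, ih]

open Classical in
lemma stayProb_eq_sum_pathWeight [Fintype S] (K : S → PMF S) (x : S) (T : ℕ) (A : ℕ → Set S) :
    stayProb K x T A = ∑ p with ∀ t : Fin (T + 1), p t ∈ A t, pathWeight K x T p := by
  rw [Finset.sum_filter]
  refine Finset.sum_congr rfl fun p _ => ?_
  by_cases h₀ : p 0 = x <;> by_cases hA : ∀ t : Fin (T + 1), p t ∈ A t <;>
    simp [pathWeight, h₀, hA]

lemma stayProb_le_one [Fintype S] (K : S → PMF S) (x : S) (T : ℕ) (A : ℕ → Set S) :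
    stayProb K x T A ≤ 1 := by
  classical
  rw [stayProb_eq_sum_pathWeight, ← sum_pathWeight K x T]
  exact Finset.sum_le_sum_of_subset (Finset.filter_subset _ _)

lemma separation_le_two [Fintype S] (K : S → PMF S) (x y : S) (T : ℕ) (A : ℕ → Set S) :
    separation K x y T A ≤ 2 := by
  have hx := ENNReal.toReal_mono ENNReal.one_ne_top (stayProb_le_one K x T A)
  have hy := ENNReal.toReal_mono ENNReal.one_ne_top (stayProb_le_one K y T fun t => (A t)ᶜ)
  rw [ENNReal.toReal_one] at hx hy
  unfold separation
  linarith

lemma optSeparation_le [Fintype S] {K : S → PMF S} {x y : S} {T : ℕ} {c : ℝ}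
    (h : ∀ A, separation K x y T A ≤ c) : optSeparation K x y T ≤ c :=
  csSup_le ⟨_, fun _ => ∅, rfl⟩ (by rintro _ ⟨A, rfl⟩; exact h A)

namespace IsCopyUpTo

variable {Ω : Type*} [MeasurableSpace Ω] {Pr : Measure Ω} {K : S → PMF S} {x : S} {T : ℕ}
  {X : ℕ → Ω → S}

lemma measure_cylinder (hX : IsCopyUpTo Pr K x T X) (p : Fin (T + 1) → S) :
    Pr {ω | ∀ t : Fin (T + 1), X t ω = p t} = pathWeight K x T p := by
  have hclamp : ∀ t : Fin (T + 1), Fin.clamp t T = t := fun t =>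
    Fin.ext (Nat.min_eq_left (Nat.le_of_lt_succ t.isLt))
  have hcyl : {ω | ∀ t : Fin (T + 1), X t ω = p t} = {ω | ∀ i ≤ T, X i ω = p (Fin.clamp i T)} := by
    ext ω
    refine ⟨fun h i hi => ?_, fun h t => ?_⟩
    · convert h ⟨i, Nat.lt_succ_of_le hi⟩ using 2
      exact Fin.ext (Nat.min_eq_left hi)
    · simpa [hclamp] using h t (Nat.le_of_lt_succ t.isLt)
  rw [hcyl, hX T le_rfl, ← Fin.prod_univ_eq_prod_range, pathWeight, ite_mul, one_mul, zero_mul]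
  have h0 : Fin.clamp 0 T = 0 := hclamp 0
  have hcs : ∀ i : Fin T, Fin.clamp i T = i.castSucc := fun i => hclamp i.castSucc
  have hs : ∀ i : Fin T, Fin.clamp (i + 1) T = i.succ := fun i => hclamp i.succ
  simp only [hcs, hs]
  rw [h0]

lemma measure_le_sum_pathWeight [Fintype S] (hX : IsCopyUpTo Pr K x T X)
    (Q : (Fin (T + 1) → S) → Prop) [DecidablePred Q] :
    Pr {ω | Q fun t => X t ω} ≤ ∑ p with Q p, pathWeight K x T p := by
  have hcover : {ω | Q fun t => X t ω} ⊆ ⋃ p ∈ ({p | Q p} : Finset _),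
      {ω | ∀ t : Fin (T + 1), X t ω = p t} := fun ω hω =>
    Set.mem_biUnion (Finset.mem_filter.2 ⟨Finset.mem_univ _, hω⟩) fun _ => rfl
  calc Pr {ω | Q fun t => X t ω}
      ≤ ∑ p with Q p, Pr {ω | ∀ t : Fin (T + 1), X t ω = p t} :=
        (measure_mono hcover).trans (measure_biUnion_finset_le _ _)
    _ = ∑ p with Q p, pathWeight K x T p :=
        Finset.sum_congr rfl fun p _ => hX.measure_cylinder p

lemma measure_exit_add_stayProb_le_one [Fintype S] (hX : IsCopyUpTo Pr K x T X)
    (A : ℕ → Set S) : Pr {ω | ∃ t ≤ T, X t ω ∉ A t} + stayProb K x T A ≤ 1 := by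
  classical
  have hexit : {ω | ∃ t ≤ T, X t ω ∉ A t} = {ω | ¬ ∀ t : Fin (T + 1), X t ω ∈ A t} := by
    ext ω
    simp only [Set.mem_ofPred_eq, not_forall]
    exact ⟨fun ⟨t, ht, h⟩ => ⟨⟨t, Nat.lt_succ_of_le ht⟩, h⟩,
      fun ⟨t, h⟩ => ⟨t, Nat.le_of_lt_succ t.isLt, h⟩⟩
  calc Pr {ω | ∃ t ≤ T, X t ω ∉ A t} + stayProb K x T A
      ≤ ∑ p with ¬ ∀ t : Fin (T + 1), p t ∈ A t, pathWeight K x T p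
        + ∑ p with ∀ t : Fin (T + 1), p t ∈ A t, pathWeight K x T p := by
        rw [hexit, stayProb_eq_sum_pathWeight]
        gcongr
        exact hX.measure_le_sum_pathWeight _
    _ = 1 := by rw [add_comm, Finset.sum_filter_add_sum_filter_not, sum_pathWeight]

lemma measure_meet_add_stayProb_add_stayProb_le_two [Fintype S] {y : S} {Y : ℕ → Ω → S}
    (hX : IsCopyUpTo Pr K x T X) (hY : IsCopyUpTo Pr K y T Y) (A : ℕ → Set S) :
    Pr {ω | ∃ t ≤ T, X t ω = Y t ω} + stayProb K x T A + stayProb K y T (fun t => (A t)ᶜ)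
      ≤ 2 := by
  set EX := {ω | ∃ t ≤ T, X t ω ∉ A t}
  set EY := {ω | ∃ t ≤ T, Y t ω ∉ (A t)ᶜ}
  have hmeet : {ω | ∃ t ≤ T, X t ω = Y t ω} ⊆ EX ∪ EY := by
    rintro ω ⟨t, ht, heq⟩
    by_cases hA : X t ω ∈ A t
    · exact Or.inr ⟨t, ht, by simpa [← heq] using hA⟩
    · exact Or.inl ⟨t, ht, hA⟩
  calc Pr {ω | ∃ t ≤ T, X t ω = Y t ω} + stayProb K x T A + stayProb K y T (fun t => (A t)ᶜ)
      ≤ Pr EX + Pr EY + stayProb K x T A + stayProb K y T (fun t => (A t)ᶜ) := by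
        gcongr
        exact (measure_mono hmeet).trans (measure_union_le _ _)
    _ = (Pr EX + stayProb K x T A) + (Pr EY + stayProb K y T (fun t => (A t)ᶜ)) := by ring
    _ ≤ 1 + 1 := add_le_add (hX.measure_exit_add_stayProb_le_one A)
        (hY.measure_exit_add_stayProb_le_one _)
    _ = 2 := one_add_one_eq_two

lemma toReal_measure_meet_le_two_sub_separation [Fintype S] {y : S} {Y : ℕ → Ω → S}
    (hX : IsCopyUpTo Pr K x T X) (hY : IsCopyUpTo Pr K y T Y) (A : ℕ → Set S) :
    (Pr {ω | ∃ t ≤ T, X t ω = Y t ω}).toReal ≤ 2 - separation K x y T A := by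
  have hsum := hX.measure_meet_add_stayProb_add_stayProb_le_two hY A
  obtain ⟨hfin, hsy⟩ := ENNReal.add_ne_top.1 (ne_top_of_le_ne_top ENNReal.ofNat_ne_top hsum)
  obtain ⟨hmeet, hsx⟩ := ENNReal.add_ne_top.1 hfin
  have hreal := ENNReal.toReal_mono ENNReal.ofNat_ne_top hsum
  rw [ENNReal.toReal_add hfin hsy, ENNReal.toReal_add hmeet hsx, ENNReal.toReal_ofNat] at hreal
  unfold separation
  linarith

end IsCopyUpTo

end

theorem meetProb_le_two_sub_separation_general {S : Type*} [Fintype S] (K : S → PMF S) (x y : S)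
    (T : ℕ) :
    (∀ (Ω : Type*) (_ : MeasurableSpace Ω) (Pr : Measure Ω), IsProbabilityMeasure Pr →
      ∀ X Y : ℕ → Ω → S, IsCopyUpTo Pr K x T X → IsCopyUpTo Pr K y T Y →
        ∀ A : ℕ → Set S,
          (Pr {ω | ∃ t ≤ T, X t ω = Y t ω}).toReal ≤ 2 - separation K x y T A) ∧
    optMeetProb K x y T ≤ 2 - optSeparation K x y T := by
  refine ⟨fun Ω _ Pr _ X Y hX hY A => hX.toReal_measure_meet_le_two_sub_separation hY A, ?_⟩
  refine Real.sSup_le ?_ (sub_nonneg.2 (optSeparation_le (separation_le_two K x y T)))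
  rintro _ ⟨Ω, _, Pr, -, X, Y, hX, hY, rfl⟩
  have : optSeparation K x y T ≤ 2 - (Pr {ω | ∃ t ≤ T, X t ω = Y t ω}).toReal :=
    optSeparation_le fun A => by linarith [hX.toReal_measure_meet_le_two_sub_separation hY A]
  linarith

/-- For any coupling over horizon `T` of copies started at `x` and `y` and any separating
sequence `A`, the meeting probability is at most `2 − S^A_T(x,y)`; consequently
`C_T(x,y) ≤ 2 − S_T(x,y)`. -/
theorem meetProb_le_two_sub_separation {S : Type*} [Fintype S] (K : S → PMF S) (x y : S)
    (T : ℕ) (hT : 0 < T) :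
    (∀ (Ω : Type*) (_ : MeasurableSpace Ω) (Pr : Measure Ω), IsProbabilityMeasure Pr →
      ∀ X Y : ℕ → Ω → S, IsCopyUpTo Pr K x T X → IsCopyUpTo Pr K y T Y →
        ∀ A : ℕ → Set S,
          (Pr {ω | ∃ t ≤ T, X t ω = Y t ω}).toReal ≤ 2 - separation K x y T A) ∧
    optMeetProb K x y T ≤ 2 - optSeparation K x y T :=
  meetProb_le_two_sub_separation_general K x y T
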